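/- arXiv:1201.2104 — 2 statements merged into one kernel-verified Lean document; each statement's English description precedes it below -/
import Mathlib

section
/- For the other direction of the primary decomposition: if a squarefree monomial X_{ρ₁}⋯X_{ρ_s} does not lie in B(Σ) = (X_τ̂ : τ ∈ Σ), then the complementary set Σ(1) ∖ {ρ₁,…,ρ_s} is not contained in the ray set of any cone of Σ, and consequently X_{ρ₁}⋯X_{ρ_s} does not lie in the ideal generated by the variables indexed by Σ(1) ∖ {ρ₁,…,ρ_s}. -/
open MvPolynomial

theorem MvPolynomial.prod_X_eq_monomial {σ R : Type*} [CommSemiring R] (S : Finset σ) :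
    (∏ i ∈ S, X i : MvPolynomial σ R) = monomial (∑ i ∈ S, Finsupp.single i 1) 1 :=
  (monomial_sum_one S _).symm

theorem MvPolynomial.prod_X_notMem_span_X_image {σ R : Type*} [CommSemiring R] [Nontrivial R]
    {S : Finset σ} {T : Set σ} (hST : Disjoint (S : Set σ) T) :
    (∏ i ∈ S, X i : MvPolynomial σ R) ∉ Ideal.span (X '' T) := by
  classical
  rw [prod_X_eq_monomial, mem_ideal_span_X_image, support_monomial, if_neg one_ne_zero]
  simp only [Finset.mem_singleton, forall_eq, not_exists, not_and, not_not]
  intro i hi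
  rw [Finsupp.finsetSum_apply]
  refine Finset.sum_eq_zero fun j hj => Finsupp.single_eq_of_ne ?_
  rintro rfl
  exact hST.notMem_of_mem_left hj hi

/-- If the squarefree monomial `∏_{ρ ∈ S} X_ρ` is not in `B(Σ) = (X_τ̂ : τ ∈ Σ)`,
then the complement `Σ(1) ∖ S` is not contained in the ray set of any cone, and
the monomial is not in the ideal generated by the variables indexed by the complement. -/
theorem not_mem_irrelevant_ideal_complement
    {ι : Type} {k : Type} [Fintype ι] [DecidableEq ι] [Field k]
    (F : Finset (Finset ι)) (S : Finset ι)
    (h : (∏ ρ ∈ S, X ρ : MvPolynomial ι k) ∉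
      Ideal.span {p : MvPolynomial ι k |
        ∃ τ ∈ F, p = ∏ ρ ∈ Finset.univ \ τ, X ρ}) :
    (∀ τ ∈ F, ¬ (Finset.univ \ S) ⊆ τ) ∧
    (∏ ρ ∈ S, X ρ : MvPolynomial ι k) ∉
      Ideal.span ((fun ρ => (X ρ : MvPolynomial ι k)) ''
        ((Finset.univ \ S : Finset ι) : Set ι)) := by
  refine ⟨fun τ hτ hsub => h ?_, prod_X_notMem_span_X_image ?_⟩
  · refine Ideal.mem_of_dvd _ (Finset.prod_dvd_prod_of_subset _ _ _ (sdiff_le_comm.mp hsub)) ?_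
    exact Ideal.subset_span ⟨τ, hτ, rfl⟩
  · rw [Finset.coe_sdiff]
    exact disjoint_sdiff_self_right
end

section
/- For a complete simplicial stacky fan 𝚺 = (ℤ^d, Σ, {v_ρ}), define χ(𝚺) = Σ_{σ ∈ Σ_max} 1/D_σ where D_σ = |det of the v_ρ for ρ ∈ σ(1)| is the stacky multiplicity of a maximal cone σ (assuming primitive lattice generation N_σ = ℤ^d). If 𝚺_σ is the stacky star subdivision of 𝚺 at a cone σ of dimension s (with new vector v₀ = Σ_{ρ ∈ σ(1)} v_ρ), then χ(𝚺_σ) = χ(𝚺) + (s−1)/D_σ. -/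
/-!
If `v ρ₀ = ∑ ρ ∈ σ₀, v ρ`, then `v ρ₀ - v ρ` lies in the span of the other generators of `σ₀`,
so each new cone `insert ρ₀ (σ₀.erase ρ)` spans the same lattice as `σ₀` and has the same
multiplicity `D σ₀`. Subdividing therefore removes one term `1 / D σ₀` and adds `s` of them.
-/

namespace Submodule

variable {R M : Type*} [Ring R] [AddCommGroup M] [Module R M]

theorem span_insert_eq_span_insert_of_sub_mem {x y : M} {s : Set M} (h : x - y ∈ span R s) :
    span R (insert x s) = span R (insert y s) := by
  have hx : x ∈ span R (insert y s) := by
    simpa using add_mem (span_mono (Set.subset_insert y s) h) (subset_span (Set.mem_insert y s))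
  have hy : y ∈ span R (insert x s) := by
    simpa using sub_mem (subset_span (Set.mem_insert x s)) (span_mono (Set.subset_insert x s) h)
  calc span R (insert x s) = span R (insert y (insert x s)) := (span_insert_eq_span hy).symm
    _ = span R (insert x (insert y s)) := by rw [Set.insert_comm]
    _ = span R (insert y s) := span_insert_eq_span hx

end Submodule

section StarSubdivision

variable {ι : Type*} [DecidableEq ι]

theorem span_image_insert_erase_eq_of_eq_sum {R M : Type*} [Ring R] [AddCommGroup M] [Module R M]
    {v : ι → M} {σ : Finset ι} {ρ₀ ρ : ι} (hv₀ : v ρ₀ = ∑ i ∈ σ, v i) (hρ : ρ ∈ σ) :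
    Submodule.span R (v '' ↑(insert ρ₀ (σ.erase ρ))) = Submodule.span R (v '' ↑σ) := by
  have hsub : v ρ₀ - v ρ ∈ Submodule.span R (v '' ↑(σ.erase ρ)) := by
    rw [hv₀, ← Finset.add_sum_erase σ v hρ, add_sub_cancel_left]
    exact Submodule.sum_mem _ fun i hi => Submodule.subset_span (Set.mem_image_of_mem v hi)
  rw [← Finset.insert_erase hρ, Finset.erase_insert (Finset.notMem_erase ρ σ)]
  simpa only [Finset.coe_insert, Set.image_insert_eq] using
    Submodule.span_insert_eq_span_insert_of_sub_mem hsub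

theorem injOn_insert_erase {σ : Finset ι} {ρ₀ : ι} (hρ₀ : ρ₀ ∉ σ) :
    Set.InjOn (fun ρ => insert ρ₀ (σ.erase ρ)) σ := by
  intro a ha b hb hab
  refine σ.erase_injOn ha hb ?_
  have hfresh (c : ι) : ρ₀ ∉ σ.erase c := fun h => hρ₀ (Finset.mem_of_mem_erase h)
  simpa only [Finset.erase_insert (hfresh a), Finset.erase_insert (hfresh b)] using
    congrArg (Finset.erase · ρ₀) hab

def starSubdivision (F : Finset (Finset ι)) (σ : Finset ι) (ρ₀ : ι) : Finset (Finset ι) :=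
  F.erase σ ∪ σ.image fun ρ => insert ρ₀ (σ.erase ρ)

theorem sum_starSubdivision_add {M : Type*} [AddCommMonoid M] (f : Finset ι → M)
    {F : Finset (Finset ι)} {σ : Finset ι} {ρ₀ : ι} (hσ : σ ∈ F) (hfresh : ∀ τ ∈ F, ρ₀ ∉ τ) :
    ∑ τ ∈ starSubdivision F σ ρ₀, f τ + f σ
      = ∑ τ ∈ F, f τ + ∑ ρ ∈ σ, f (insert ρ₀ (σ.erase ρ)) := by
  have hdisj : Disjoint (F.erase σ) (σ.image fun ρ => insert ρ₀ (σ.erase ρ)) := by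
    refine Finset.disjoint_left.mpr fun τ hτ hτ' => ?_
    obtain ⟨ρ, -, rfl⟩ := Finset.mem_image.mp hτ'
    exact hfresh _ (Finset.mem_of_mem_erase hτ) (Finset.mem_insert_self _ _)
  rw [starSubdivision, Finset.sum_union hdisj, Finset.sum_image (injOn_insert_erase (hfresh σ hσ)),
    ← Finset.sum_erase_add F f hσ]
  abel

end StarSubdivision

theorem euler_char_star_subdivision_general
    {ι : Type} [DecidableEq ι] {d : ℕ}
    (v : ι → Fin d → ℤ) (F : Finset (Finset ι)) (σ0 : Finset ι)
    (hσ0 : σ0 ∈ F)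
    (ρ0 : ι) (hfresh : ∀ τ ∈ F, ρ0 ∉ τ)
    (hv0 : v ρ0 = ∑ ρ ∈ σ0, v ρ)
    (D : Finset ι → ℕ)
    (hD : ∀ τ : Finset ι, D τ = (Submodule.span ℤ (v '' ↑τ)).toAddSubgroup.index)
    (F' : Finset (Finset ι))
    (hF' : F' = (F.erase σ0) ∪ σ0.image (fun ρ => insert ρ0 (σ0.erase ρ))) :
    (∑ τ ∈ F', (1 : ℚ) / D τ)
      = (∑ τ ∈ F, (1 : ℚ) / D τ) + ((σ0.card : ℚ) - 1) / D σ0 := by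
  have hnew : ∑ ρ ∈ σ0, (1 : ℚ) / D (insert ρ0 (σ0.erase ρ)) = σ0.card / D σ0 := by
    rw [Finset.sum_congr rfl fun ρ hρ => by
        rw [hD, span_image_insert_erase_eq_of_eq_sum hv0 hρ, ← hD],
      Finset.sum_const, nsmul_eq_mul, mul_one_div]
  have hsum := sum_starSubdivision_add (fun τ => (1 : ℚ) / D τ) hσ0 hfresh
  rw [hnew, starSubdivision, ← hF'] at hsum
  rw [sub_div]
  linarith

/-- For a complete simplicial stacky fan with maximal cones `F` and
`χ = Σ_{σ ∈ F} 1/D_σ`, where `D_σ = [ℤ^d : ℤ⟨v_ρ, ρ ∈ σ(1)⟩]` (the stacky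
multiplicity, assuming `N_σ = ℤ^d`), the stacky star subdivision of `F` at a
maximal cone `σ₀` (with new vector `v₀ = Σ_{ρ ∈ σ₀(1)} v_ρ` on a new ray `ρ₀`)
satisfies `χ(𝚺_σ) = χ(𝚺) + (s−1)/D_{σ₀}` where `s = dim σ₀`. -/
theorem euler_char_star_subdivision
    {ι : Type} [DecidableEq ι] {d : ℕ}
    (v : ι → Fin d → ℤ) (F : Finset (Finset ι)) (σ0 : Finset ι)
    (hσ0 : σ0 ∈ F) (hcard : σ0.card = d)
    (ρ0 : ι) (hfresh : ∀ τ ∈ F, ρ0 ∉ τ)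
    (hv0 : v ρ0 = ∑ ρ ∈ σ0, v ρ)
    (D : Finset ι → ℕ)
    (hD : ∀ τ : Finset ι, D τ = (Submodule.span ℤ (v '' ↑τ)).toAddSubgroup.index)
    (F' : Finset (Finset ι))
    (hF' : F' = (F.erase σ0) ∪ σ0.image (fun ρ => insert ρ0 (σ0.erase ρ))) :
    (∑ τ ∈ F', (1 : ℚ) / D τ)
      = (∑ τ ∈ F, (1 : ℚ) / D τ) + ((σ0.card : ℚ) - 1) / D σ0 :=
  euler_char_star_subdivision_general v F σ0 hσ0 ρ0 hfresh hv0 D hD F' hF'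
end
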